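/- Let 𝒳 be a set, let (𝒴, 𝒜) be a measurable space, let W assign to each x ∈ 𝒳 a probability measure W_x on 𝒴, and let V : 𝒴 → {0,1} be measurable. Let n, N ∈ ℕ and λ₁, λ₂ ∈ (0,1). Suppose c_{i,k} ∈ [0,1] (for i ∈ {1,…,N}, k ∈ {1,…,n}) and x_{i,k} ∈ 𝒳 satisfy W_{x_{i,k}}( V^{−1}({1}) ) = c_{i,k} for all i,k. If the codewords c_i = (c_{i,1},…,c_{i,n}) together with sets D_1,…,D_N ⊆ {0,1}^n form an (n,N,λ₁,λ₂) DI code for the Bernoulli channel — i.e. the product Bernoulli measures satisfy ⊗_k Bernoulli(c_{i,k})(D_i) ≥ 1 − λ₁ and ⊗_k Bernoulli(c_{i,k})(D_j) ≤ λ₂ for j ≠ i — then the codewords x_i = (x_{i,1},…,x_{i,n}) together with the decoding sets D̃_i := { y ∈ 𝒴^n : (V(y_1),…,V(y_n)) ∈ D_i } form an (n,N,λ₁,λ₂) DI code for W: ⊗_k W_{x_{i,k}}(D̃_i) ≥ 1 − λ₁ and ⊗_k W_{x_{i,k}}(D̃_j) ≤ λ₂ for all j ≠ i. -/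

import Mathlib

/-!
Pushing `W x` forward along `V` gives the Bernoulli measure whose parameter is the mass of
`V ⁻¹' {true}`, and the pushforward of a product measure under a coordinatewise map is the
product of the pushforwards. Hence each decoding set `{y | V ∘ y ∈ D j}` has the same
probability under the product of the `W (x i k)` as `D j` under the product of the
`bernoulliBool (c i k)`, and both code conditions transfer verbatim.
-/

open MeasureTheory

noncomputable def bernoulliBool (x : ℝ) : Measure Bool :=
  ENNReal.ofReal x • Measure.dirac true + ENNReal.ofReal (1 - x) • Measure.dirac false

lemma bernoulliBool_singleton_true (x : ℝ) : bernoulliBool x {true} = ENNReal.ofReal x := by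
  simp [bernoulliBool]

lemma bernoulliBool_singleton_false (x : ℝ) :
    bernoulliBool x {false} = ENNReal.ofReal (1 - x) := by
  simp [bernoulliBool]

lemma map_eq_bernoulliBool {Y : Type*} [MeasurableSpace Y] {μ : Measure Y}
    [IsProbabilityMeasure μ] {V : Y → Bool} (hV : Measurable V) {r : ℝ} (hr : 0 ≤ r)
    (h : μ (V ⁻¹' {true}) = ENNReal.ofReal r) :
    μ.map V = bernoulliBool r := by
  have hfalse : V ⁻¹' {false} = (V ⁻¹' {true})ᶜ := by ext; simp
  refine Measure.ext_of_singleton fun b => ?_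
  rw [Measure.map_apply hV (measurableSet_singleton b)]
  cases b
  · rw [bernoulliBool_singleton_false, hfalse, prob_compl_eq_one_sub (hV .of_discrete), h,
      ENNReal.ofReal_sub 1 hr, ENNReal.ofReal_one]
  · rw [bernoulliBool_singleton_true, h]

lemma pi_preimage_coordinatewise_eq_pi_bernoulliBool {ι Y : Type*} [Fintype ι]
    [MeasurableSpace Y] {μ : ι → Measure Y} [∀ k, IsProbabilityMeasure (μ k)]
    {V : Y → Bool} (hV : Measurable V) {r : ι → ℝ} (hr : ∀ k, 0 ≤ r k)
    (h : ∀ k, μ k (V ⁻¹' {true}) = ENNReal.ofReal (r k)) (S : Set (ι → Bool)) :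
    Measure.pi μ {y | (fun k => V (y k)) ∈ S} = Measure.pi (fun k => bernoulliBool (r k)) S := by
  have : ∀ k, IsProbabilityMeasure ((μ k).map V) :=
    fun k => Measure.isProbabilityMeasure_map hV.aemeasurable
  calc Measure.pi μ {y | (fun k => V (y k)) ∈ S}
      = (Measure.pi μ).map (fun y k => V (y k)) S :=
        (Measure.map_apply (by fun_prop) .of_discrete).symm
    _ = Measure.pi (fun k => (μ k).map V) S := by
        rw [Measure.pi_map_pi fun _ => hV.aemeasurable]
    _ = Measure.pi (fun k => bernoulliBool (r k)) S := by
        simp_rw [map_eq_bernoulliBool hV (hr _) (h _)]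

theorem bernoulli_code_transfer_general
    {X Y : Type*} [MeasurableSpace Y]
    (W : X → Measure Y) (hW : ∀ x, IsProbabilityMeasure (W x))
    (V : Y → Bool) (hV : Measurable V)
    (n N : ℕ) (lam1 lam2 : ℝ)
    (c : Fin N → Fin n → ℝ) (hc : ∀ i k, c i k ∈ Set.Icc (0:ℝ) 1)
    (x : Fin N → Fin n → X)
    (hsim : ∀ i k, W (x i k) (V ⁻¹' {true}) = ENNReal.ofReal (c i k))
    (D : Fin N → Set (Fin n → Bool))
    (hD1 : ∀ i, ENNReal.ofReal (1 - lam1)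
        ≤ Measure.pi (fun k => bernoulliBool (c i k)) (D i))
    (hD2 : ∀ i j, i ≠ j →
        Measure.pi (fun k => bernoulliBool (c i k)) (D j) ≤ ENNReal.ofReal lam2) :
    (∀ i, ENNReal.ofReal (1 - lam1)
        ≤ Measure.pi (fun k => W (x i k)) {y : Fin n → Y | (fun k => V (y k)) ∈ D i}) ∧
    (∀ i j, i ≠ j →
        Measure.pi (fun k => W (x i k)) {y : Fin n → Y | (fun k => V (y k)) ∈ D j}
          ≤ ENNReal.ofReal lam2) := by
  have := hW
  have transfer : ∀ i j, Measure.pi (fun k => W (x i k)) {y | (fun k => V (y k)) ∈ D j}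
      = Measure.pi (fun k => bernoulliBool (c i k)) (D j) := fun i j =>
    pi_preimage_coordinatewise_eq_pi_bernoulliBool hV (fun k => (hc i k).1) (hsim i) (D j)
  exact ⟨fun i => (transfer i i).symm ▸ hD1 i, fun i j hij => (transfer i j).symm ▸ hD2 i j hij⟩

/-- Code-transfer content of Lemma 1: if a channel `W` with binary post-processing
`V` simulates the Bernoulli parameters `c i k` on the inputs `x i k`, then any
`(n, N, λ₁, λ₂)` DI code for the Bernoulli channel with codewords `c i` transfers to
an `(n, N, λ₁, λ₂)` DI code for `W` with codewords `x i` and decoding sets obtained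
by coordinatewise post-processing. -/
theorem bernoulli_code_transfer
    {X Y : Type*} [MeasurableSpace Y]
    (W : X → Measure Y) (hW : ∀ x, IsProbabilityMeasure (W x))
    (V : Y → Bool) (hV : Measurable V)
    (n N : ℕ) (lam1 lam2 : ℝ)
    (hlam1 : lam1 ∈ Set.Ioo (0:ℝ) 1) (hlam2 : lam2 ∈ Set.Ioo (0:ℝ) 1)
    (c : Fin N → Fin n → ℝ) (hc : ∀ i k, c i k ∈ Set.Icc (0:ℝ) 1)
    (x : Fin N → Fin n → X)
    (hsim : ∀ i k, W (x i k) (V ⁻¹' {true}) = ENNReal.ofReal (c i k))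
    (D : Fin N → Set (Fin n → Bool))
    (hD1 : ∀ i, ENNReal.ofReal (1 - lam1)
        ≤ Measure.pi (fun k => bernoulliBool (c i k)) (D i))
    (hD2 : ∀ i j, i ≠ j →
        Measure.pi (fun k => bernoulliBool (c i k)) (D j) ≤ ENNReal.ofReal lam2) :
    (∀ i, ENNReal.ofReal (1 - lam1)
        ≤ Measure.pi (fun k => W (x i k)) {y : Fin n → Y | (fun k => V (y k)) ∈ D i}) ∧
    (∀ i j, i ≠ j →
        Measure.pi (fun k => W (x i k)) {y : Fin n → Y | (fun k => V (y k)) ∈ D j}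
          ≤ ENNReal.ofReal lam2) :=
  bernoulli_code_transfer_general W hW V hV n N lam1 lam2 c hc x hsim D hD1 hD2
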